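/- arXiv:1304.2215 — 8 statements merged into one kernel-verified Lean document; each statement's English description precedes it below -/
import Mathlib

section
/- For every finite simple graph G, the graph G^{1/3} obtained from G by replacing each edge by a path with three edges admits a homomorphism to the 5-cycle C_5 if and only if G admits a proper 5-colouring. -/
/-- The 3-subdivision `G^{1/3}` of a simple graph `G`: each edge `[u,v]` is replaced by a
path with three edges `u — (u,v) — (v,u) — v`, the two internal vertices of the path
replacing the edge `[u,v]` being the two ordered pairs `(u,v)` and `(v,u)`. -/
def subdiv3 {V : Type} (G : SimpleGraph V) :
    SimpleGraph (V ⊕ {p : V × V // G.Adj p.1 p.2}) :=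
  SimpleGraph.fromRel (fun x y =>
    match x, y with
    | Sum.inl u, Sum.inr e => u = e.1.1
    | Sum.inr e, Sum.inr e' => e.1.1 = e'.1.2 ∧ e.1.2 = e'.1.1
    | _, _ => False)

/-- The cycle `C₅` on 5 vertices. -/
def cyc5 : SimpleGraph (ZMod 5) where
  Adj u v := v - u = 1 ∨ u - v = 1
  symm := ⟨fun u v h => h.symm⟩
  loopless := by
    constructor
    intro u h
    rcases h with h | h <;> rw [sub_self] at h <;> exact absurd h (by decide)

/-!
A homomorphism `G^{1/3} → H` sends each edge `uv` of `G` to a walk `c u — x — y — c v` of length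
three in `H`, where `c` is its restriction to the branch vertices. If `H` is triangle-free such a
walk never closes up, so `c` is a homomorphism to the cube power of `H`; conversely, middle edges
for all 3-walks can be chosen compatibly with reversal by orienting each pair of endpoints along a
linear order. The cube power of the triangle-free `C₅` is `K₅`.
-/
namespace SimpleGraph

variable {V : Type} {W : Type*} {G : SimpleGraph V} {H : SimpleGraph W}

/-- The cube power without its loops, which come from triangles. -/
def walkCube (H : SimpleGraph W) : SimpleGraph W where
  Adj a b := a ≠ b ∧ ∃ x y, H.Adj a x ∧ H.Adj x y ∧ H.Adj y b
  symm := ⟨fun _ _ ⟨hne, x, y, hx, hxy, hy⟩ => ⟨hne.symm, y, x, hy.symm, hxy.symm, hx.symm⟩⟩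

@[simp]
lemma walkCube_adj {a b : W} :
    H.walkCube.Adj a b ↔ a ≠ b ∧ ∃ x y, H.Adj a x ∧ H.Adj x y ∧ H.Adj y b :=
  Iff.rfl

lemma CliqueFree.ne_of_adj_of_adj_of_adj (hH : H.CliqueFree 3) {a x y b : W}
    (hx : H.Adj a x) (hxy : H.Adj x y) (hy : H.Adj y b) : a ≠ b := by
  classical
  rintro rfl
  exact hH {a, x, y} (is3Clique_triple_iff.2 ⟨hx, hy.symm, hxy⟩)

lemma exists_walkCube_mid (H : SimpleGraph W) : ∃ m : W → W → W,
    ∀ a b, H.walkCube.Adj a b → H.Adj a (m a b) ∧ H.Adj (m a b) (m b a) := by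
  classical
  let : LinearOrder W := linearOrderOfSTO WellOrderingRel
  choose! x y hx hxy hy using fun a b (h : H.walkCube.Adj a b) => (walkCube_adj.1 h).2
  refine ⟨fun a b => if a < b then x a b else y b a, fun a b hab => ?_⟩
  rcases lt_or_gt_of_ne (walkCube_adj.1 hab).1 with h | h
  · simpa [h, h.not_gt] using ⟨hx a b hab, hxy a b hab⟩
  · simpa [h, h.not_gt] using ⟨(hy b a hab.symm).symm, (hxy b a hab.symm).symm⟩

@[simp]
lemma subdiv3_not_adj_inl_inl {u v : V} : ¬(subdiv3 G).Adj (.inl u) (.inl v) := by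
  simp [subdiv3]

@[simp]
lemma subdiv3_adj_inl_inr {u : V} {e : {p : V × V // G.Adj p.1 p.2}} :
    (subdiv3 G).Adj (.inl u) (.inr e) ↔ u = e.1.1 := by
  simp [subdiv3]

@[simp]
lemma subdiv3_adj_inr_inl {u : V} {e : {p : V × V // G.Adj p.1 p.2}} :
    (subdiv3 G).Adj (.inr e) (.inl u) ↔ u = e.1.1 := by
  rw [adj_comm, subdiv3_adj_inl_inr]

@[simp]
lemma subdiv3_adj_inr_inr {e e' : {p : V × V // G.Adj p.1 p.2}} :
    (subdiv3 G).Adj (.inr e) (.inr e') ↔ e'.1 = e.1.swap := by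
  obtain ⟨⟨u, v⟩, huv⟩ := e
  obtain ⟨⟨u', v'⟩, -⟩ := e'
  simp only [subdiv3, fromRel_adj, ne_eq, Sum.inr.injEq, Subtype.mk.injEq, Prod.mk.injEq,
    Prod.swap_prod_mk]
  constructor
  · rintro ⟨-, ⟨rfl, rfl⟩ | ⟨rfl, rfl⟩⟩ <;> exact ⟨rfl, rfl⟩
  · rintro ⟨rfl, rfl⟩
    refine ⟨?_, .inl ⟨rfl, rfl⟩⟩
    rintro ⟨rfl, -⟩
    exact huv.ne rfl

def Hom.ofSubdiv3 (hH : H.CliqueFree 3) (f : subdiv3 G →g H) : G →g H.walkCube where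
  toFun v := f (.inl v)
  map_rel' {u v} huv := by
    have hx := f.map_adj (subdiv3_adj_inl_inr.2 rfl :
      (subdiv3 G).Adj (.inl u) (.inr ⟨(u, v), huv⟩))
    have hxy := f.map_adj (subdiv3_adj_inr_inr.2 rfl :
      (subdiv3 G).Adj (.inr ⟨(u, v), huv⟩) (.inr ⟨(v, u), huv.symm⟩))
    have hy := f.map_adj (subdiv3_adj_inr_inl.2 rfl :
      (subdiv3 G).Adj (.inr ⟨(v, u), huv.symm⟩) (.inl v))
    exact walkCube_adj.2 ⟨hH.ne_of_adj_of_adj_of_adj hx hxy hy, _, _, hx, hxy, hy⟩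

lemma nonempty_subdiv3_hom_of_hom_walkCube (f : G →g H.walkCube) :
    Nonempty (subdiv3 G →g H) := by
  obtain ⟨m, hm⟩ := H.exists_walkCube_mid
  refine ⟨⟨Sum.elim f fun e => m (f e.1.1) (f e.1.2), ?_⟩⟩
  rintro (u | e) (v | e') h
  · exact (subdiv3_not_adj_inl_inl h).elim
  · obtain rfl := subdiv3_adj_inl_inr.1 h
    exact (hm _ _ (f.map_adj e'.2)).1
  · obtain rfl := subdiv3_adj_inr_inl.1 h
    exact (hm _ _ (f.map_adj e.2)).1.symm
  · simp only [Sum.elim_inr, subdiv3_adj_inr_inr.1 h, Prod.fst_swap, Prod.snd_swap]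
    exact (hm _ _ (f.map_adj e.2)).2

theorem nonempty_subdiv3_hom_iff (hH : H.CliqueFree 3) :
    Nonempty (subdiv3 G →g H) ↔ Nonempty (G →g H.walkCube) :=
  ⟨fun ⟨f⟩ => ⟨Hom.ofSubdiv3 hH f⟩, fun ⟨f⟩ => nonempty_subdiv3_hom_of_hom_walkCube f⟩

end SimpleGraph

open SimpleGraph

instance : DecidableRel cyc5.Adj := fun u v =>
  inferInstanceAs (Decidable (v - u = 1 ∨ u - v = 1))

lemma cyc5_cliqueFree_three : cyc5.CliqueFree 3 := by
  intro s hs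
  obtain ⟨a, b, c, hab, hac, hbc, -⟩ := is3Clique_iff.1 hs
  revert a b c
  decide

lemma cyc5_walkCube : cyc5.walkCube = ⊤ := by
  ext a b
  simp only [walkCube_adj, top_adj, and_iff_left_iff_imp]
  revert a b
  decide

theorem subdiv3_hom_C5_iff_5colorable_general {V : Type} (G : SimpleGraph V) :
    Nonempty (subdiv3 G →g cyc5) ↔ G.Colorable 5 := by
  rw [nonempty_subdiv3_hom_iff cyc5_cliqueFree_three, cyc5_walkCube]
  exact ⟨fun ⟨C⟩ => by simpa using Coloring.colorable (G := G) (α := ZMod 5) C,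
    fun hc => ⟨hc.toColoring (by simp)⟩⟩

/-- For every finite simple graph `G`, the 3-subdivision `G^{1/3}` admits a homomorphism to
the 5-cycle `C₅` iff `G` is 5-colourable. -/
theorem subdiv3_hom_C5_iff_5colorable {V : Type} [Fintype V] (G : SimpleGraph V) :
    Nonempty (subdiv3 G →g cyc5) ↔ G.Colorable 5 :=
  subdiv3_hom_C5_iff_5colorable_general G
end

section
/- For every positive integer n, a finite simple graph G admits a proper n-colouring in which the neighbourhood of each colour class is an independent set if and only if G admits a homomorphism to the graph U(n) = Ω₃(K_n). -/
/-!
A homomorphism `f : G →g U(n)` is read as a colouring `v ↦ (f v).1` together with a set of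
colours `(f v).2` assigned to each vertex: adjacency in `U(n)` forces the colours of the
neighbours of `v` into `(f v).2`, and forces the colour sets of adjacent vertices to be disjoint, which
is exactly independence of the neighbourhoods of colour classes. Conversely a colouring `c`
gives the homomorphism `v ↦ (c v, c '' N(v))`.
-/

/-- The graph `U(n) = Ω₃(K_n)`: vertices are the pairs `(u, U)` where `u` is a vertex of
`K_n` and `U` is a subset of the neighbourhood of `u` in `K_n` (i.e. a set of vertices
distinct from `u`); `(u,U)` and `(v,V)` are adjacent iff `u ∈ V`, `v ∈ U`, and every
vertex of `U` is adjacent (i.e. unequal, in `K_n`) to every vertex of `V`. -/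
def Un (n : ℕ) : SimpleGraph {p : Fin n × Set (Fin n) // ∀ v ∈ p.2, v ≠ p.1} where
  Adj p q := p.1.1 ∈ q.1.2 ∧ q.1.1 ∈ p.1.2 ∧ ∀ a ∈ p.1.2, ∀ b ∈ q.1.2, a ≠ b
  symm := ⟨fun p q h => ⟨h.2.1, h.1, fun a ha b hb => (h.2.2 b hb a ha).symm⟩⟩
  loopless := ⟨fun p h => p.2 p.1.1 h.1 rfl⟩

namespace Un

variable {n : ℕ} {p q p' q' : {p : Fin n × Set (Fin n) // ∀ v ∈ p.2, v ≠ p.1}}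

theorem fst_ne_of_adj (h : (Un n).Adj p q) : p.1.1 ≠ q.1.1 :=
  fun he => p.2 _ h.2.1 he.symm

theorem fst_ne_of_adj_of_adj_of_adj (h : (Un n).Adj p q) (hp : (Un n).Adj p p')
    (hq : (Un n).Adj q q') : p'.1.1 ≠ q'.1.1 :=
  h.2.2 _ hp.2.1 _ hq.2.1

end Un

def SimpleGraph.homUnOfColouring {V : Type} {G : SimpleGraph V} {n : ℕ} (c : V → Fin n)
    (hc : ∀ u v, G.Adj u v → c u ≠ c v)
    (hdisj : ∀ x y, G.Adj x y → Disjoint (c '' G.neighborSet x) (c '' G.neighborSet y)) :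
    G →g Un n where
  toFun v := ⟨(c v, c '' G.neighborSet v), by
    rintro _ ⟨w, hw, rfl⟩
    exact (hc v w hw).symm⟩
  map_rel' {u v} huv := ⟨⟨u, huv.symm, rfl⟩, ⟨v, huv, rfl⟩,
    fun _ ha _ hb hab => Set.disjoint_left.1 (hdisj u v huv) ha (hab ▸ hb)⟩

theorem colouring_indep_neighbourhoods_iff_hom_Un_general {V : Type}
    (G : SimpleGraph V) (n : ℕ) :
    (∃ c : V → Fin n, (∀ u v, G.Adj u v → c u ≠ c v) ∧
      (∀ i : Fin n, ∀ x y, G.Adj x y →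
        (∃ x', G.Adj x x' ∧ c x' = i) → (∃ y', G.Adj y y' ∧ c y' = i) → False)) ↔
    Nonempty (G →g Un n) := by
  constructor
  · rintro ⟨c, hc, hind⟩
    refine ⟨SimpleGraph.homUnOfColouring c hc fun x y hxy => Set.disjoint_left.2 ?_⟩
    rintro _ ⟨x', hx', rfl⟩ ⟨y', hy', hc'⟩
    exact hind _ x y hxy ⟨x', hx', rfl⟩ ⟨y', hy', hc'⟩
  · rintro ⟨f⟩
    refine ⟨fun v => (f v).1.1, fun u v huv => Un.fst_ne_of_adj (f.map_adj huv), ?_⟩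
    rintro i x y hxy ⟨x', hx', rfl⟩ ⟨y', hy', hc'⟩
    exact Un.fst_ne_of_adj_of_adj_of_adj (f.map_adj hxy) (f.map_adj hx') (f.map_adj hy') hc'.symm

/-- A finite simple graph `G` admits a proper `n`-colouring in which the neighbourhood of
each colour class is an independent set iff `G` admits a homomorphism to `U(n) = Ω₃(K_n)`. -/
theorem colouring_indep_neighbourhoods_iff_hom_Un {V : Type} [Fintype V]
    (G : SimpleGraph V) (n : ℕ) (hn : 0 < n) :
    (∃ c : V → Fin n, (∀ u v, G.Adj u v → c u ≠ c v) ∧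
      (∀ i : Fin n, ∀ x y, G.Adj x y →
        (∃ x', G.Adj x x' ∧ c x' = i) → (∃ y', G.Adj y y' ∧ c y' = i) → False)) ↔
    Nonempty (G →g Un n) :=
  colouring_indep_neighbourhoods_iff_hom_Un_general G n
end

section
/- For every graph K, K is multiplicative if and only if Ω₃(K) is multiplicative. -/
/-- A graph: a vertex set together with a symmetric adjacency relation (loops allowed). -/
structure LoopyGraph where
  V : Type
  Adj : V → V → Prop
  symm : ∀ ⦃u v⦄, Adj u v → Adj v u

/-- The categorial product of two graphs. -/
def LoopyGraph.tensor (G H : LoopyGraph) : LoopyGraph where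
  V := G.V × H.V
  Adj p q := G.Adj p.1 q.1 ∧ H.Adj p.2 q.2
  symm := fun p q h => ⟨G.symm h.1, H.symm h.2⟩

/-- A graph `K` is multiplicative if whenever a product `G × H` admits a homomorphism to
`K`, one of the factors `G` or `H` admits a homomorphism to `K`. -/
def GraphMultiplicative (K : LoopyGraph) : Prop :=
  ∀ G H : LoopyGraph, Nonempty ((G.tensor H).Adj →r K.Adj) →
    Nonempty (G.Adj →r K.Adj) ∨ Nonempty (H.Adj →r K.Adj)

/-- `Ω₃(H)`: vertices are the pairs `(u, U)` with `u ∈ V(H)` and `U` a subset of the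
neighbourhood of `u` in `H`; `(u,U) ~ (v,V)` iff `u ∈ V`, `v ∈ U`, and every vertex of
`U` is adjacent to every vertex of `V`. -/
def Omega3 (H : LoopyGraph) : LoopyGraph where
  V := {p : H.V × Set H.V // ∀ v ∈ p.2, H.Adj p.1 v}
  Adj p q := p.1.1 ∈ q.1.2 ∧ q.1.1 ∈ p.1.2 ∧ ∀ a ∈ p.1.2, ∀ b ∈ q.1.2, H.Adj a b
  symm := by
    rintro p q ⟨h1, h2, h3⟩
    exact ⟨h2, h1, fun a ha b hb => H.symm (h3 b hb a ha)⟩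

/-!
Write `G³` for the graph on `V(G)` whose edges are the walks of length three. A homomorphism
`G → Ω₃(K)` exists iff a homomorphism `G³ → K` does, so `Ω₃` behaves as a right adjoint of the
cube. Since `G³ × H³ → (G × H)³`, multiplicativity of `K` transfers to `Ω₃(K)`. Conversely `Ω₃`
is a functor with `Ω₃(G) × Ω₃(H) → Ω₃(G × H)`, and it reflects the existence of homomorphisms
because `G → (Ω₃ G)³`; so multiplicativity of `Ω₃(K)` transfers back to `K`.
-/

namespace LoopyGraph

def cube (G : LoopyGraph) : LoopyGraph where
  V := G.V
  Adj u v := ∃ a b, G.Adj u a ∧ G.Adj a b ∧ G.Adj b v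
  symm := by
    rintro u v ⟨a, b, hua, hab, hbv⟩
    exact ⟨b, a, G.symm hbv, G.symm hab, G.symm hua⟩

def tensorCubeHom (G H : LoopyGraph) :
    ((G.cube).tensor (H.cube)).Adj →r ((G.tensor H).cube).Adj where
  toFun p := p
  map_rel' := by
    rintro p q ⟨⟨a, b, h₁, h₂, h₃⟩, ⟨c, d, k₁, k₂, k₃⟩⟩
    exact ⟨(a, c), (b, d), ⟨h₁, k₁⟩, ⟨h₂, k₂⟩, ⟨h₃, k₃⟩⟩

end LoopyGraph

namespace Omega3

variable {G K : LoopyGraph}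

def homOfCubeHom (f : G.cube.Adj →r K.Adj) : G.Adj →r (Omega3 K).Adj where
  toFun u := ⟨(f u, f '' {w | G.Adj u w}), by
    rintro _ ⟨w, huw, rfl⟩
    exact f.map_rel ⟨w, u, huw, G.symm huw, huw⟩⟩
  map_rel' := by
    intro u v huv
    refine ⟨⟨u, G.symm huv, rfl⟩, ⟨v, huv, rfl⟩, ?_⟩
    rintro _ ⟨a, hua, rfl⟩ _ ⟨b, hvb, rfl⟩
    exact f.map_rel ⟨u, v, G.symm hua, huv, hvb⟩

def cubeHomOfHom (g : G.Adj →r (Omega3 K).Adj) : G.cube.Adj →r K.Adj where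
  toFun u := (g u).1.1
  map_rel' := by
    rintro u v ⟨a, b, hua, hab, hbv⟩
    exact (g.map_rel hab).2.2 _ (g.map_rel hua).1 _ (g.map_rel hbv).2.1

theorem nonempty_hom_iff_nonempty_cube_hom :
    Nonempty (G.Adj →r (Omega3 K).Adj) ↔ Nonempty (G.cube.Adj →r K.Adj) :=
  ⟨Nonempty.map cubeHomOfHom, Nonempty.map homOfCubeHom⟩

def map (f : G.Adj →r K.Adj) : (Omega3 G).Adj →r (Omega3 K).Adj where
  toFun p := ⟨(f p.1.1, f '' p.1.2), by
    rintro _ ⟨w, hw, rfl⟩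
    exact f.map_rel (p.2 w hw)⟩
  map_rel' := by
    rintro p q ⟨hpq, hqp, hPQ⟩
    refine ⟨⟨_, hpq, rfl⟩, ⟨_, hqp, rfl⟩, ?_⟩
    rintro _ ⟨x, hx, rfl⟩ _ ⟨y, hy, rfl⟩
    exact f.map_rel (hPQ x hx y hy)

def tensorHom (G H : LoopyGraph) :
    ((Omega3 G).tensor (Omega3 H)).Adj →r (Omega3 (G.tensor H)).Adj where
  toFun p := ⟨((p.1.1.1, p.2.1.1), p.1.1.2 ×ˢ p.2.1.2), by
    rintro ⟨a, b⟩ ⟨ha, hb⟩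
    exact ⟨p.1.2 a ha, p.2.2 b hb⟩⟩
  map_rel' := by
    rintro p q ⟨⟨h₁, h₂, h₃⟩, ⟨k₁, k₂, k₃⟩⟩
    exact ⟨⟨h₁, k₁⟩, ⟨h₂, k₂⟩, fun a ha b hb => ⟨h₃ _ ha.1 _ hb.1, k₃ _ ha.2 _ hb.2⟩⟩

/-- An edge `uv` goes to the walk `(u, N(u)) ~ (v, {u}) ~ (u, {v}) ~ (v, N(v))`. -/
def toCube (G : LoopyGraph) : G.Adj →r ((Omega3 G).cube).Adj where
  toFun u := ⟨(u, {w | G.Adj u w}), fun _ hw => hw⟩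
  map_rel' := by
    intro u v huv
    refine ⟨⟨(v, {u}), ?_⟩, ⟨(u, {v}), ?_⟩, ?_, ?_, ?_⟩
    · rintro _ rfl; exact G.symm huv
    · rintro _ rfl; exact huv
    · exact ⟨rfl, huv, fun a hua _ hb => hb ▸ G.symm hua⟩
    · exact ⟨rfl, rfl, fun _ ha _ hb => ha ▸ hb ▸ huv⟩
    · exact ⟨G.symm huv, rfl, fun _ ha b hvb => ha ▸ hvb⟩

theorem nonempty_hom_of_nonempty_omega3_hom (h : Nonempty ((Omega3 G).Adj →r (Omega3 K).Adj)) :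
    Nonempty (G.Adj →r K.Adj) :=
  h.map fun g => (cubeHomOfHom g).comp (toCube G)

end Omega3

/-- For every graph `K`, `K` is multiplicative iff `Ω₃(K)` is multiplicative. -/
theorem multiplicative_iff_omega3_multiplicative (K : LoopyGraph) :
    GraphMultiplicative K ↔ GraphMultiplicative (Omega3 K) := by
  constructor
  · rintro hK G H ⟨f⟩
    simp only [Omega3.nonempty_hom_iff_nonempty_cube_hom]
    exact hK G.cube H.cube ⟨(Omega3.cubeHomOfHom f).comp (G.tensorCubeHom H)⟩
  · rintro hΩ G H ⟨f⟩
    exact (hΩ _ _ ⟨(Omega3.map f).comp (Omega3.tensorHom G H)⟩).imp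
      Omega3.nonempty_hom_of_nonempty_omega3_hom Omega3.nonempty_hom_of_nonempty_omega3_hom
end

section
/- Let m = 2k+1 be an odd positive integer. For all graphs G and H, there exists a homomorphism of Γ_m(G) to H if and only if there exists a homomorphism of G to Ω_m(H). -/
/-- A graph: a vertex set together with a symmetric adjacency relation (loops allowed). -/
structure LoopGraph where
  V : Type
  Adj : V → V → Prop
  symm : ∀ ⦃u v⦄, Adj u v → Adj v u

/-- `Γ_m(G)`: the graph on the vertex set of `G` in which `u ~ v` iff `G` contains a walk
of length exactly `m` from `u` to `v`. -/
def GammaM (m : ℕ) (G : LoopGraph) : LoopGraph where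
  V := G.V
  Adj u v := ∃ w : ℕ → G.V, w 0 = u ∧ w m = v ∧ ∀ i < m, G.Adj (w i) (w (i + 1))
  symm := by
    rintro u v ⟨w, h0, hm, hw⟩
    refine ⟨fun i => w (m - i), by simpa using hm, by simpa using h0, ?_⟩
    intro i hi
    have h1 : m - i - 1 + 1 = m - i := by omega
    have h2 : m - (i + 1) = m - i - 1 := by omega
    have := hw (m - i - 1) (by omega)
    rw [h1] at this
    simp only [h2]
    exact G.symm this

/-- Two sets of vertices are completely joined if every vertex of one is adjacent to every
vertex of the other. -/
def CJ (H : LoopGraph) (A B : Set H.V) : Prop := ∀ a ∈ A, ∀ b ∈ B, H.Adj a b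

/-- The extended tuple `(U₀, U₁, …, U_k)` with `U₀ = {u}`. -/
def extT (H : LoopGraph) (u : H.V) {k : ℕ} (U : Fin k → Set H.V) : Fin (k + 1) → Set H.V :=
  Fin.cases {u} U

/-- The vertices of `Ω_{2k+1}(H)`: the `(k+1)`-tuples `(u, U₁, …, U_k)` with `u ∈ V(H)`,
`U₁` a subset of the neighbourhood of `u` in `H` (that is, `{u}` completely joined to
`U₁`), and each `U_i` completely joined to `U_{i-1}` for `i = 2, …, k`. -/
def OmegaVert (H : LoopGraph) (k : ℕ) : Type :=
  {p : H.V × (Fin k → Set H.V) //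
    ∀ i : Fin k, CJ H (extT H p.1 p.2 i.castSucc) (extT H p.1 p.2 i.succ)}

/-- `Ω_{2k+1}(H)`: two tuples `(u, U₁, …, U_k)` and `(v, V₁, …, V_k)` are adjacent iff
`u ∈ V₁`, `v ∈ U₁`, `U_{i-1} ⊆ V_i` and `V_{i-1} ⊆ U_i` for `i = 2, …, k`, and `U_k` is
completely joined to `V_k` (with the convention `U₀ = {u}`, `V₀ = {v}`, the first two
conditions are the subset conditions for `i = 1`). -/
def OmegaM (k : ℕ) (H : LoopGraph) : LoopGraph where
  V := OmegaVert H k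
  Adj p q :=
    (∀ i : Fin k, extT H p.1.1 p.1.2 i.castSucc ⊆ extT H q.1.1 q.1.2 i.succ ∧
                  extT H q.1.1 q.1.2 i.castSucc ⊆ extT H p.1.1 p.1.2 i.succ) ∧
    CJ H (extT H p.1.1 p.1.2 (Fin.last k)) (extT H q.1.1 q.1.2 (Fin.last k))
  symm := by
    rintro p q ⟨h1, h2⟩
    exact ⟨fun i => ⟨(h1 i).2, (h1 i).1⟩, fun a ha b hb => H.symm (h2 b hb a ha)⟩

/-!
A homomorphism `f : Γ_{2k+1}(G) → H` sends `u` to the tuple `(f u, U₁, …, U_k)` with `U_i` the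
image under `f` of the vertices reached from `u` by walks of length `i`. Any two such walks
from the ends of a walk of length `l` glue to a walk of length `i + l + j`, which, when this
length is positive, can be padded by back-and-forth steps to length `2k+1` if it has that
parity; this gives the complete joins that `Ω_{2k+1}(H)` requires. Conversely, along a walk
`w₀ … w_{2k+1}` in `G` the adjacency of `g w_j` and `g w_{j+1}` in `Ω_{2k+1}(H)` pushes the
first coordinate of `g w₀` into the `k`-th set of `g w_k`, and symmetrically that of
`g w_{2k+1}` into the `k`-th set of `g w_{k+1}`; these two sets are completely joined.
-/

section

variable {G H : LoopGraph} {a b c : G.V} {n p : ℕ}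

theorem gammaM_adj_zero_iff : (GammaM 0 G).Adj a b ↔ a = b := by
  constructor
  · rintro ⟨w, rfl, rfl, -⟩
    rfl
  · rintro rfl
    exact ⟨fun _ => a, rfl, rfl, nofun⟩

theorem gammaM_adj_succ_iff :
    (GammaM (n + 1) G).Adj a c ↔ ∃ b, (GammaM n G).Adj a b ∧ G.Adj b c := by
  constructor
  · rintro ⟨w, hw0, rfl, hw⟩
    exact ⟨w n, ⟨w, hw0, rfl, fun i hi => hw i (by omega)⟩, hw n (by omega)⟩
  · rintro ⟨b, ⟨w, hw0, rfl, hw⟩, hbc⟩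
    refine ⟨Function.update w (n + 1) c, by simpa using hw0, by simp, fun i hi => ?_⟩
    obtain hin | rfl := Nat.lt_succ_iff_lt_or_eq.1 hi
    · simpa [Function.update_of_ne (by omega : i ≠ n + 1),
        Function.update_of_ne (by omega : i + 1 ≠ n + 1)] using hw i hin
    · simpa [Function.update_of_ne (by omega : i ≠ i + 1)] using hbc

theorem gammaM_adj_add_iff :
    (GammaM (n + p) G).Adj a c ↔ ∃ b, (GammaM n G).Adj a b ∧ (GammaM p G).Adj b c := by
  induction p generalizing c with
  | zero =>
    exact ⟨fun h => ⟨c, h, gammaM_adj_zero_iff.2 rfl⟩,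
      fun ⟨b, hab, hbc⟩ => gammaM_adj_zero_iff.1 hbc ▸ hab⟩
  | succ p ih =>
    rw [← add_assoc, gammaM_adj_succ_iff]
    constructor
    · rintro ⟨d, had, hdc⟩
      obtain ⟨b, hab, hbd⟩ := ih.1 had
      exact ⟨b, hab, gammaM_adj_succ_iff.2 ⟨d, hbd, hdc⟩⟩
    · rintro ⟨b, hab, hbc⟩
      obtain ⟨d, hbd, hdc⟩ := gammaM_adj_succ_iff.1 hbc
      exact ⟨d, ih.2 ⟨b, hab, hbd⟩, hdc⟩

theorem gammaM_adj_one_iff : (GammaM 1 G).Adj a b ↔ G.Adj a b := by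
  constructor
  · rintro ⟨w, rfl, rfl, hw⟩
    exact hw 0 one_pos
  · exact fun h => gammaM_adj_succ_iff.2 ⟨a, gammaM_adj_zero_iff.2 rfl, h⟩

theorem gammaM_adj_two_mul_self (h : G.Adj a b) : ∀ t, (GammaM (2 * t) G).Adj a a
  | 0 => gammaM_adj_zero_iff.2 rfl
  | t + 1 => gammaM_adj_add_iff.2
      ⟨a, gammaM_adj_two_mul_self h t,
        gammaM_adj_add_iff (n := 1).2 ⟨b, gammaM_adj_one_iff.2 h, gammaM_adj_one_iff.2 (G.symm h)⟩⟩

theorem gammaM_adj_add_two_mul (h : (GammaM n G).Adj a b) (hn : n ≠ 0) (t : ℕ) :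
    (GammaM (n + 2 * t) G).Adj a b := by
  obtain ⟨n, rfl⟩ := Nat.exists_eq_succ_of_ne_zero hn
  obtain ⟨c, -, hcb⟩ := gammaM_adj_succ_iff.1 h
  exact gammaM_adj_add_iff.2 ⟨b, h, gammaM_adj_two_mul_self (G.symm hcb) t⟩

def walkImage (G : LoopGraph) (f : G.V → H.V) (u : G.V) (i : ℕ) : Set H.V :=
  f '' {x | (GammaM i G).Adj u x}

theorem extT_walkImage {k : ℕ} (f : G.V → H.V) (u : G.V) (j : Fin (k + 1)) :
    extT H (f u) (fun i : Fin k => walkImage G f u (i + 1)) j = walkImage G f u j := by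
  induction j using Fin.cases with
  | zero => simp [extT, walkImage, gammaM_adj_zero_iff]
  | succ i => rfl

theorem walkImage_subset_succ (f : G.V → H.V) {u v : G.V} (h : G.Adj v u) (i : ℕ) :
    walkImage G f u i ⊆ walkImage G f v (i + 1) := by
  rintro _ ⟨x, hx, rfl⟩
  rw [add_comm]
  exact ⟨x, gammaM_adj_add_iff.2 ⟨u, gammaM_adj_one_iff.2 h, hx⟩, rfl⟩

theorem completelyJoined_walkImage {m : ℕ} {f : G.V → H.V}
    (hf : ∀ ⦃x y⦄, (GammaM m G).Adj x y → H.Adj (f x) (f y)) {u v : G.V} {i l j t : ℕ}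
    (huv : (GammaM l G).Adj u v) (hpos : i + l + j ≠ 0) (hm : i + l + j + 2 * t = m) :
    CJ H (walkImage G f u i) (walkImage G f v j) := by
  rintro _ ⟨x, hx, rfl⟩ _ ⟨y, hy, rfl⟩
  have hxy : (GammaM (i + l + j) G).Adj x y :=
    gammaM_adj_add_iff.2 ⟨v, gammaM_adj_add_iff.2 ⟨u, (GammaM i G).symm hx, huv⟩, hy⟩
  exact hf (hm ▸ gammaM_adj_add_two_mul hxy hpos t)

/-- The homomorphism `Γ_{2k+1}(G) → H` is passed unbundled: applied to a vertex of `G` rather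
than of `GammaM (2 * k + 1) G`, a bundled one yields terms that `rw` and `simp` reject as
ill-typed at reducible transparency. -/
def omegaHomOfGammaHom {k : ℕ} (f : G.V → H.V)
    (hf : ∀ ⦃x y⦄, (GammaM (2 * k + 1) G).Adj x y → H.Adj (f x) (f y)) :
    G.Adj →r (OmegaM k H).Adj where
  toFun u := ⟨(f u, fun i => walkImage G f u (i + 1)), fun i => by
    simp only [extT_walkImage, Fin.val_castSucc, Fin.val_succ]
    exact completelyJoined_walkImage hf (gammaM_adj_zero_iff.2 rfl) (by omega)
      (by omega : i + 0 + (i + 1) + 2 * (k - i) = 2 * k + 1)⟩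
  map_rel' {u v} huv := by
    refine ⟨fun i => ?_, ?_⟩ <;>
      simp only [extT_walkImage, Fin.val_castSucc, Fin.val_succ, Fin.val_last]
    · exact ⟨walkImage_subset_succ f (G.symm huv) i, walkImage_subset_succ f huv i⟩
    · exact completelyJoined_walkImage hf (gammaM_adj_one_iff.2 huv) (by omega)
        (by omega : k + 1 + k + 2 * 0 = 2 * k + 1)

theorem mem_extT_of_gammaM_adj {k : ℕ} (g : G.Adj →r (OmegaM k H).Adj) (j : Fin (k + 1))
    {u v : G.V} (h : (GammaM j G).Adj u v) : (g u).1.1 ∈ extT H (g v).1.1 (g v).1.2 j := by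
  induction j using Fin.induction generalizing v with
  | zero =>
    rw [← gammaM_adj_zero_iff.1 h]
    rfl
  | succ i ih =>
    obtain ⟨w, huw, hwv⟩ := gammaM_adj_succ_iff.1 h
    exact ((g.map_rel hwv).1 i).1 (ih huw)

def gammaHomOfOmegaHom {k : ℕ} (g : G.Adj →r (OmegaM k H).Adj) :
    (GammaM (2 * k + 1) G).Adj →r H.Adj where
  toFun u := (g u).1.1
  map_rel' {a b} h := by
    rw [show 2 * k + 1 = k + 1 + k by ring] at h
    obtain ⟨y, hay, hyb⟩ := gammaM_adj_add_iff.1 h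
    obtain ⟨x, hax, hxy⟩ := gammaM_adj_succ_iff.1 hay
    exact (g.map_rel hxy).2 _ (mem_extT_of_gammaM_adj g (Fin.last k) hax)
      _ (mem_extT_of_gammaM_adj g (Fin.last k) ((GammaM k G).symm hyb))

end

/-- For odd `m = 2k+1` and all graphs `G`, `H`, there is a homomorphism `Γ_m(G) → H`
iff there is a homomorphism `G → Ω_m(H)`. -/
theorem gammaM_omegaM_adjunction (m k : ℕ) (hm : m = 2 * k + 1) (G H : LoopGraph) :
    Nonempty ((GammaM m G).Adj →r H.Adj) ↔ Nonempty (G.Adj →r (OmegaM k H).Adj) := by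
  subst hm
  exact ⟨fun ⟨f⟩ => ⟨omegaHomOfGammaHom f fun _ _ => f.map_rel⟩, fun ⟨g⟩ => ⟨gammaHomOfOmegaHom g⟩⟩
end

section
/- For every finite digraph H and every positive integer k, if the arc graph δ(H) admits a proper k-colouring then H admits a proper 2^k-colouring; consequently the chromatic number of δ(H) is at least log₂ of the chromatic number of H. -/
/-- The symmetrization of a digraph: the simple graph in which `u ~ v` iff there is an
arc between them in some direction. -/
def symmG {α : Type} (D : α → α → Prop) : SimpleGraph α where
  Adj u v := u ≠ v ∧ (D u v ∨ D v u)
  symm := ⟨fun u v h => ⟨h.1.symm, h.2.symm⟩⟩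
  loopless := ⟨fun u h => h.1 rfl⟩

/-- The arc graph `δ(H)` of a digraph `H`: vertices are the arcs of `H`, with an arc from
`(u,v)` to `(x,y)` iff `v = x`. -/
def arcRel {α : Type} (D : α → α → Prop)
    (e f : {p : α × α // D p.1 p.2}) : Prop :=
  e.1.2 = f.1.1

/-- The chromatic number of a digraph: the least `k` such that its symmetrization is
properly `k`-colourable. -/
noncomputable def chrNum {α : Type} (D : α → α → Prop) : ℕ :=
  sInf {k : ℕ | (symmG D).Colorable k}


/-!
Colour each vertex `v` of `H` by the set of colours of the arcs leaving `v`. If `u → v` is an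
arc with `u ≠ v`, the colour of `(u, v)` is among those of `u`; it cannot be among those of
`v`, since every arc `(v, w)` is adjacent to `(u, v)` in `δ(H)`. So `k` arc colours give a
proper colouring of `H` by subsets of a `k`-set.
-/

section ArcGraph

variable {α β : Type} {D : α → α → Prop}

def outArcColours (C : (symmG (arcRel D)).Coloring β) (v : α) : Set β :=
  {c | ∃ w, ∃ h : D v w, C ⟨(v, w), h⟩ = c}

lemma outArcColours_ne_of_arc (C : (symmG (arcRel D)).Coloring β) {u v : α} (huv : u ≠ v)
    (h : D u v) : outArcColours C u ≠ outArcColours C v := by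
  intro heq
  have hmem : C ⟨(u, v), h⟩ ∈ outArcColours C v := heq ▸ ⟨v, h, rfl⟩
  obtain ⟨w, hw, hcol⟩ := hmem
  have hadj : (symmG (arcRel D)).Adj ⟨(u, v), h⟩ ⟨(v, w), hw⟩ :=
    ⟨fun he => huv (congrArg (fun e => e.1.1) he), Or.inl rfl⟩
  exact C.valid hadj hcol.symm

def outArcColouring (C : (symmG (arcRel D)).Coloring β) : (symmG D).Coloring (Set β) :=
  SimpleGraph.Coloring.mk (outArcColours C) fun {_ _} ⟨huv, hD⟩ =>
    hD.elim (outArcColours_ne_of_arc C huv)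
      fun hvu => (outArcColours_ne_of_arc C huv.symm hvu).symm

theorem symmG_colorable_two_pow_of_arcRel_colorable {k : ℕ}
    (h : (symmG (arcRel D)).Colorable k) : (symmG D).Colorable (2 ^ k) := by
  obtain ⟨C⟩ := h
  simpa [Fintype.card_set] using (outArcColouring C).colorable

theorem symmG_colorable_chrNum [Finite α] : (symmG D).Colorable (chrNum D) := by
  have := Fintype.ofFinite α
  exact Nat.sInf_mem (s := {k | (symmG D).Colorable k}) ⟨_, (symmG D).colorable_of_fintype⟩

theorem chrNum_le_of_colorable {k : ℕ} (h : (symmG D).Colorable k) : chrNum D ≤ k :=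
  Nat.sInf_le h

theorem chrNum_le_two_pow_chrNum_arcRel [Finite α] : chrNum D ≤ 2 ^ chrNum (arcRel D) :=
  chrNum_le_of_colorable (symmG_colorable_two_pow_of_arcRel_colorable symmG_colorable_chrNum)

end ArcGraph

theorem Real.logb_two_le_of_le_two_pow {n m : ℕ} (h : n ≤ 2 ^ m) : Real.logb 2 n ≤ m := by
  rcases Nat.eq_zero_or_pos n with rfl | hn
  · simp
  · rw [Real.logb_le_iff_le_rpow one_lt_two (by exact_mod_cast hn), Real.rpow_natCast]
    exact_mod_cast h

theorem arcGraph_colouring_general {α : Type} [Fintype α] (D : α → α → Prop) (k : ℕ) :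
    ((symmG (arcRel D)).Colorable k → (symmG D).Colorable (2 ^ k)) ∧
    Real.logb 2 (chrNum D) ≤ (chrNum (arcRel D) : ℝ) :=
  ⟨symmG_colorable_two_pow_of_arcRel_colorable,
    Real.logb_two_le_of_le_two_pow chrNum_le_two_pow_chrNum_arcRel⟩

/-- For every finite digraph `H` and positive integer `k`: if the arc graph `δ(H)` admits
a proper `k`-colouring then `H` admits a proper `2^k`-colouring; consequently the
chromatic number of `δ(H)` is at least `log₂` of the chromatic number of `H`. -/
theorem arcGraph_colouring {α : Type} [Fintype α] (D : α → α → Prop) (k : ℕ)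
    (hk : 0 < k) :
    ((symmG (arcRel D)).Colorable k → (symmG D).Colorable (2 ^ k)) ∧
    Real.logb 2 (chrNum D) ≤ (chrNum (arcRel D) : ℝ) :=
  arcGraph_colouring_general D k
end

section
/- Let n and m be positive integers. For every digraph G, there exists a homomorphism of G to ι_m(T⃗_n) if and only if no oriented path in the family P_{n,m−1} admits a homomorphism to G. -/
/-- The transitive tournament `T⃗_n`: an arc `i → j` iff `i < j`. -/
def tournRel (n : ℕ) (i j : Fin n) : Prop := i < j

/-- The `m`-th interleaved adjoint `ι_m(H)`: vertices are the `m`-tuples of vertices of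
`H`, with an arc `(u₁,…,u_m) → (v₁,…,v_m)` iff `u_i → v_i` for all `i` and
`v_i → u_{i+1}` for all `i = 1, …, m-1`. -/
def iotaRel {α : Type} (m : ℕ) (H : α → α → Prop) (U V : Fin m → α) : Prop :=
  (∀ i, H (U i) (V i)) ∧ ∀ i j : Fin m, i.val + 1 = j.val → H (V i) (U j)

/-- The oriented path on vertices `0, 1, …, n` obtained from the directed path `P⃗_n` by
orienting the arc between `i` and `i+1` from `i` to `i+1` iff `o i = true`. -/
def pathRel (n : ℕ) (o : Fin n → Bool) (a b : Fin (n + 1)) : Prop :=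
  ∃ i : Fin n, (o i = true ∧ a = i.castSucc ∧ b = i.succ) ∨
               (o i = false ∧ a = i.succ ∧ b = i.castSucc)

/-- Extension of an orientation `o : Fin n → Bool` to all of `ℕ`. -/
def oext (n : ℕ) (o : Fin n → Bool) (i : ℕ) : Bool :=
  if h : i < n then o ⟨i, h⟩ else true

lemma filter_card_eq (n : ℕ) (o : Fin n → Bool) :
    (Finset.univ.filter fun i => o i = false).card
      = ((Finset.range n).filter fun i => oext n o i = false).card := by
  rw [Finset.card_filter, Finset.card_filter, ← Fin.sum_univ_eq_sum_range]
  refine Finset.sum_congr rfl fun i _ => ?_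
  simp [oext, i.isLt]

/-- For every digraph `G`, there is a homomorphism `G → ι_m(T⃗_n)` iff no oriented path
obtained from the directed path `P⃗_n` by reversing at most `m-1` arcs admits a
homomorphism to `G`. -/
theorem hom_iota_iff_no_path (n m : ℕ) (hn : 0 < n) (hm : 0 < m) {α : Type}
    (G : α → α → Prop) :
    Nonempty (G →r iotaRel m (tournRel n)) ↔
    ∀ o : Fin n → Bool, (Finset.univ.filter fun i => o i = false).card ≤ m - 1 →
      ¬ Nonempty (pathRel n o →r G) := by
  constructor
  · rintro ⟨f⟩ o hcard ⟨p⟩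
    set c : ℕ → ℕ := fun k => ((Finset.range k).filter fun i => oext n o i = false).card
      with hc
    have hcmono : ∀ k l : ℕ, k ≤ l → c k ≤ c l := fun k l h =>
      Finset.card_le_card (Finset.filter_subset_filter _ (Finset.range_subset_range.2 h))
    have hcn : c n ≤ m - 1 := by
      show ((Finset.range n).filter fun i => oext n o i = false).card ≤ m - 1
      rw [← filter_card_eq]; exact hcard
    have hclt : ∀ k, k ≤ n → c k < m := by
      intro k hk
      have := hcmono k n hk
      omega
    have hstep : ∀ i : Fin n,
        c (i.val + 1) = if o i = false then c i.val + 1 else c i.val := by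
      intro i
      have hnot : (i : ℕ) ∉ Finset.range i.val := by simp
      have ho : oext n o i.val = o i := by simp [oext, i.isLt]
      simp only [hc, Finset.range_add_one, Finset.filter_insert, ho]
      by_cases h : o i = false
      · rw [if_pos h, if_pos h, Finset.card_insert_of_notMem (fun hmem => hnot (Finset.mem_of_mem_filter _ hmem))]
      · rw [if_neg h, if_neg h]
    set w : Fin (n + 1) → Fin n := fun k =>
      f (p k) ⟨c k.val, hclt k.val (Nat.lt_succ_iff.mp k.isLt)⟩ with hw
    have hsm : StrictMono w := by
      rw [Fin.strictMono_iff_lt_succ]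
      intro i
      by_cases ho : o i = false
      · have hpath : pathRel n o i.succ i.castSucc := ⟨i, Or.inr ⟨ho, rfl, rfl⟩⟩
        have hio := f.map_rel (p.map_rel hpath)
        have hlt1 : c i.val + 1 < m := by
          have := hclt (i.val + 1) i.isLt
          rw [hstep i, if_pos ho] at this
          exact this
        have h2 := hio.2 ⟨c i.val, hclt i.val (le_of_lt i.isLt)⟩ ⟨c i.val + 1, hlt1⟩ rfl
        have hidx : (⟨c (i.succ.val), hclt i.succ.val (Nat.lt_succ_iff.mp i.succ.isLt)⟩ : Fin m)
            = ⟨c i.val + 1, hlt1⟩ := by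
          simp [Fin.val_succ, hstep i, ho]
        have hidx2 : (⟨c (i.castSucc.val), hclt i.castSucc.val (Nat.lt_succ_iff.mp i.castSucc.isLt)⟩ : Fin m)
            = ⟨c i.val, hclt i.val (le_of_lt i.isLt)⟩ := by
          simp [Fin.coe_castSucc]
        simp only [hw, hidx, hidx2]
        exact h2
      · have ho' : o i = true := by simp at ho; exact ho
        have hpath : pathRel n o i.castSucc i.succ := ⟨i, Or.inl ⟨ho', rfl, rfl⟩⟩
        have hio := f.map_rel (p.map_rel hpath)
        have h1 := hio.1 ⟨c i.val, hclt i.val (le_of_lt i.isLt)⟩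
        have hidx : (⟨c (i.succ.val), hclt i.succ.val (Nat.lt_succ_iff.mp i.succ.isLt)⟩ : Fin m)
            = ⟨c i.val, hclt i.val (le_of_lt i.isLt)⟩ := by
          simp [Fin.val_succ, hstep i, ho]
        have hidx2 : (⟨c (i.castSucc.val), hclt i.castSucc.val (Nat.lt_succ_iff.mp i.castSucc.isLt)⟩ : Fin m)
            = ⟨c i.val, hclt i.val (le_of_lt i.isLt)⟩ := by
          simp [Fin.coe_castSucc]
        simp only [hw, hidx, hidx2]
        exact h1
    have hinj := hsm.injective
    have hle := Fintype.card_le_of_injective w hinj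
    simp only [Fintype.card_fin] at hle
    omega
  · intro hyp
    set R : α × Fin m → α × Fin m → Prop := fun x y =>
      (G x.1 y.1 ∧ x.2 = y.2) ∨ (G y.1 x.1 ∧ x.2.val + 1 = y.2.val) with hR
    -- no directed walk of length `n` in the shuffle digraph
    have noBad : ¬ ∃ W : ℕ → α × Fin m, ∀ i < n, R (W i) (W (i + 1)) := by
      rintro ⟨W, hW⟩
      set o : Fin n → Bool := fun i => decide ((W i.val).2 = (W (i.val + 1)).2) with hoo
      set c : ℕ → ℕ := fun k => ((Finset.range k).filter fun i => oext n o i = false).card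
        with hc
      have key : ∀ k, k ≤ n → c k ≤ ((W k).2 : ℕ) := by
        intro k
        induction k with
        | zero => intro _; simp [hc]
        | succ k ih =>
          intro hk
          have hk' : k < n := hk
          have ihk := ih (le_of_lt hk')
          have hck : c (k + 1) = if oext n o k = false then c k + 1 else c k := by
            simp only [hc, Finset.range_add_one, Finset.filter_insert]
            by_cases h : oext n o k = false
            · rw [if_pos h, if_pos h, Finset.card_insert_of_notMem]
              intro hmem
              exact absurd (Finset.mem_of_mem_filter _ hmem) (by simp)
            · rw [if_neg h, if_neg h]
          have ho : oext n o k = decide ((W k).2 = (W (k + 1)).2) := by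
            simp [oext, hk', hoo]
          by_cases heq : (W k).2 = (W (k + 1)).2
          · rw [hck, ho, decide_eq_true heq]
            simp only [if_neg (by simp : ¬ (true : Bool) = false)]
            rw [← heq] at *
            omega
          · rcases hW k hk' with ⟨_, h2⟩ | ⟨_, h2⟩
            · exact absurd h2 heq
            · rw [hck, ho]
              rw [if_pos (by simp [heq])]
              omega
      have hcard : (Finset.univ.filter fun i => o i = false).card ≤ m - 1 := by
        rw [filter_card_eq]
        have h1 : ((Finset.range n).filter fun i => oext n o i = false).card
            ≤ ((W n).2 : ℕ) := key n le_rfl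
        have h2 : ((W n).2 : ℕ) < m := (W n).2.isLt
        omega
      refine hyp o hcard ⟨⟨fun a => (W a.val).1, ?_⟩⟩
      rintro a b ⟨i, ⟨hot, ha, hb⟩ | ⟨hof, ha, hb⟩⟩
      · have heq : (W i.val).2 = (W (i.val + 1)).2 := by
          have := hot
          rw [hoo] at this
          exact of_decide_eq_true this
        rcases hW i.val i.isLt with ⟨hg, _⟩ | ⟨_, h2⟩
        · subst ha; subst hb
          simpa [Fin.coe_castSucc, Fin.val_succ] using hg
        · rw [heq] at h2; omega
      · have hne : ¬ (W i.val).2 = (W (i.val + 1)).2 := by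
          have := hof
          rw [hoo] at this
          exact of_decide_eq_false this
        rcases hW i.val i.isLt with ⟨_, h2⟩ | ⟨hg, _⟩
        · exact absurd h2 hne
        · subst ha; subst hb
          simpa [Fin.coe_castSucc, Fin.val_succ] using hg
    -- level function
    set S : α × Fin m → Set ℕ := fun x =>
      {k | ∃ W : ℕ → α × Fin m, W k = x ∧ ∀ i < k, R (W i) (W (i + 1))} with hS
    have hub : ∀ x k, k ∈ S x → k < n := by
      intro x k ⟨W, _, hWr⟩
      by_contra hge
      push_neg at hge
      exact noBad ⟨W, fun i hi => hWr i (lt_of_lt_of_le hi hge)⟩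
    have hne : ∀ x, 0 ∈ S x := fun x => ⟨fun _ => x, rfl, by omega⟩
    have hbdd : ∀ x, BddAbove (S x) := fun x => ⟨n, fun k hk => le_of_lt (hub x k hk)⟩
    set len : α × Fin m → ℕ := fun x => sSup (S x) with hlen
    have hmem : ∀ x, len x ∈ S x := fun x => Nat.sSup_mem ⟨0, hne x⟩ (hbdd x)
    have hltn : ∀ x, len x < n := fun x => hub x _ (hmem x)
    have harc : ∀ x y, R x y → len x + 1 ≤ len y := by
      intro x y hxy
      obtain ⟨W, hWx, hWr⟩ := hmem x
      refine le_csSup (hbdd y) ⟨Function.update W (len x + 1) y, Function.update_self _ _ _, ?_⟩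
      intro i hi
      rcases Nat.lt_succ_iff_lt_or_eq.mp hi with hi' | hi'
      · rw [Function.update_of_ne (by omega), Function.update_of_ne (by omega)]
        exact hWr i hi'
      · subst hi'
        rw [Function.update_of_ne (by omega), Function.update_self, hWx]
        exact hxy
    refine ⟨⟨fun u i => ⟨len (u, i), hltn _⟩, ?_⟩⟩
    intro u v huv
    constructor
    · intro i
      have := harc (u, i) (v, i) (Or.inl ⟨huv, rfl⟩)
      exact Fin.mk_lt_mk.mpr (by omega)
    · intro i j hij
      have := harc (v, i) (u, j) (Or.inr ⟨huv, hij⟩)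
      exact Fin.mk_lt_mk.mpr (by omega)
end

section
/- For relatively prime positive integers m and n with n ≥ 2m, there exist homomorphisms in both directions between the circular complete graph K_{n/m} and B(n,m), the symmetrization of ι_m(T⃗_n); that is, K_{n/m} and B(n,m) are homomorphically equivalent. -/
/-!
`u ↦ (⌊(u + i·n)/m⌋)_{i<m}` maps `K_{n/m}` into `B(n,m)`: if `u` and `v` are at circular distance
in `[m, n-m]`, then `u + i·n` and `v + i·n` are at least `m` apart and the larger of them stays
at least `m` below the smaller one shifted by `n`, so the floors strictly interleave.
Conversely `U ↦ ∑ U_i` maps `B(n,m)` into `K_{n/m}`: an arc `U → V` raises every coordinate,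
so `∑ V ≥ ∑ U + m`, and `V_i < U_{i+1}` with `V_m < n` gives `∑ V + m ≤ ∑ U + n`.
-/

/-- Adjacency in the circular complete graph `K_{n/m}`: vertex set `Z_n`, with `u ~ v`
iff `u - v ∈ {m, m+1, …, n-m}`. -/
def circRel (n m : ℕ) (u v : ZMod n) : Prop :=
  ∃ k : ℕ, m ≤ k ∧ k ≤ n - m ∧ u - v = (k : ZMod n)

/-- The symmetrization of a digraph, as an adjacency relation: `u ~ v` iff there is an
arc between them in some direction. -/
def symmRel {α : Type} (D : α → α → Prop) (u v : α) : Prop := D u v ∨ D v u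

theorem Nat.div_lt_div_of_add_le {a b m : ℕ} (hm : 0 < m) (h : a + m ≤ b) : a / m < b / m := by
  have := Nat.div_le_div_right (c := m) h
  rw [Nat.add_div_right _ hm] at this
  omega

section Circular

variable {n m : ℕ}

theorem circRel_symm {u v : ZMod n} (h : circRel n m u v) : circRel n m v u := by
  obtain ⟨k, hmk, hkn, hk⟩ := h
  refine ⟨n - k, by omega, by omega, ?_⟩
  rw [Nat.cast_sub (by omega), ZMod.natCast_self, ← hk]
  ring

theorem circRel_natCast_of_add_le {a b : ℕ} (hab : a + m ≤ b) (hba : b + m ≤ a + n) :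
    circRel n m b a :=
  ⟨b - a, by omega, by omega, by rw [Nat.cast_sub (by omega)]⟩

theorem circRel.le_val_sub [NeZero n] (hm : 0 < m) {u v : ZMod n} (h : circRel n m u v) :
    m ≤ (u - v).val ∧ (u - v).val + m ≤ n := by
  obtain ⟨k, hmk, hkn, hk⟩ := h
  rw [hk, ZMod.val_natCast, Nat.mod_eq_of_lt (by omega)]
  omega

end Circular

def floorTuple (n m : ℕ) [NeZero n] (u : ZMod n) (i : Fin m) : Fin n :=
  ⟨(u.val + i * n) / m, by
    rw [Nat.div_lt_iff_lt_mul i.pos]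
    have := u.val_lt
    have : (i + 1) * n ≤ m * n := Nat.mul_le_mul_right n i.isLt
    nlinarith⟩

section FloorTuple

variable {n m : ℕ} [NeZero n]

theorem iotaRel_floorTuple {u v : ZMod n} (hvu : v.val + m ≤ u.val) (huv : u.val + m ≤ v.val + n) :
    iotaRel m (tournRel n) (floorTuple n m v) (floorTuple n m u) := by
  refine ⟨fun i => ?_, fun i j hij => ?_⟩
  · exact Nat.div_lt_div_of_add_le i.pos (by omega)
  · have hj : j * n = i * n + n := by rw [← hij]; ring
    exact Nat.div_lt_div_of_add_le i.pos (by simp only [hj]; omega)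

theorem iotaRel_floorTuple_of_circRel (hm : 0 < m) {u v : ZMod n} (h : circRel n m u v)
    (hvu : v.val ≤ u.val) :
    iotaRel m (tournRel n) (floorTuple n m v) (floorTuple n m u) := by
  have hbounds := h.le_val_sub hm
  rw [ZMod.val_sub hvu] at hbounds
  exact iotaRel_floorTuple (by omega) (by omega)

end FloorTuple

section CoordinateSum

variable {n m : ℕ} {U V : Fin m → Fin n}

theorem sum_add_le_sum_of_iotaRel (h : iotaRel m (tournRel n) U V) :
    ∑ i, (U i).val + m ≤ ∑ i, (V i).val := by
  calc ∑ i, (U i).val + m = ∑ i, ((U i).val + 1) := by simp [Finset.sum_add_distrib]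
    _ ≤ ∑ i, (V i).val := Finset.sum_le_sum fun i _ => h.1 i

theorem sum_add_le_sum_add_of_iotaRel (h : iotaRel m (tournRel n) U V) :
    ∑ i, (V i).val + m ≤ ∑ i, (U i).val + n := by
  cases m with
  | zero => simp
  | succ p =>
    have hinterleave : ∑ i : Fin p, (V i.castSucc).val + p ≤ ∑ i : Fin p, (U i.succ).val :=
      calc ∑ i : Fin p, (V i.castSucc).val + p = ∑ i : Fin p, ((V i.castSucc).val + 1) := by
            simp [Finset.sum_add_distrib]
        _ ≤ _ := Finset.sum_le_sum fun i _ => h.2 i.castSucc i.succ rfl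
    rw [Fin.sum_univ_castSucc, Fin.sum_univ_succ (f := fun i => (U i).val)]
    have := (V (Fin.last p)).isLt
    omega

theorem circRel_sum_of_iotaRel (h : iotaRel m (tournRel n) U V) :
    circRel n m (∑ i, (V i).val : ℕ) (∑ i, (U i).val : ℕ) :=
  circRel_natCast_of_add_le (sum_add_le_sum_of_iotaRel h) (sum_add_le_sum_add_of_iotaRel h)

end CoordinateSum

theorem circ_hom_equiv_B_general (n m : ℕ) (hm : 0 < m) (h2 : 2 * m ≤ n) :
    Nonempty (circRel n m →r symmRel (iotaRel m (tournRel n))) ∧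
    Nonempty (symmRel (iotaRel m (tournRel n)) →r circRel n m) := by
  have : NeZero n := ⟨by omega⟩
  refine ⟨⟨⟨floorTuple n m, fun {u v} h => ?_⟩⟩,
    ⟨⟨fun U => (∑ i, (U i).val : ℕ), fun {U V} h => ?_⟩⟩⟩
  · rcases le_total v.val u.val with hvu | huv
    · exact Or.inr (iotaRel_floorTuple_of_circRel hm h hvu)
    · exact Or.inl (iotaRel_floorTuple_of_circRel hm (circRel_symm h) huv)
  · rcases h with h | h
    · exact circRel_symm (circRel_sum_of_iotaRel h)
    · exact circRel_sum_of_iotaRel h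

/-- For relatively prime positive integers `m`, `n` with `n ≥ 2m`, there exist graph
homomorphisms in both directions between the circular complete graph `K_{n/m}` and
`B(n,m)`, the symmetrization of `ι_m(T⃗_n)`. -/
theorem circ_hom_equiv_B (n m : ℕ) (hm : 0 < m) (h2 : 2 * m ≤ n)
    (hcop : Nat.Coprime n m) :
    Nonempty (circRel n m →r symmRel (iotaRel m (tournRel n))) ∧
    Nonempty (symmRel (iotaRel m (tournRel n)) →r circRel n m) :=
  circ_hom_equiv_B_general n m hm h2
end

section
/- Let n and m be relatively prime positive integers with 2m ≤ n. A finite simple graph G has circular chromatic number at most n/m if and only if G admits an orientation G⃗ such that no oriented path in the family P_{n,m−1} admits a homomorphism to G⃗. -/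
/-- The circular chromatic number of a finite graph `G`: the least value `n/m` over
relatively prime positive integers `n`, `m` with `2m ≤ n` such that `G` admits a
homomorphism to the circular complete graph `K_{n/m}`. -/
noncomputable def circChrom {V : Type} [Fintype V] (G : SimpleGraph V) : ℝ :=
  sInf {x : ℝ | ∃ n m : ℕ, 0 < m ∧ 2 * m ≤ n ∧ Nat.Coprime n m ∧
    Nonempty (G.Adj →r circRel n m) ∧ x = (n : ℝ) / (m : ℝ)}

/-- `D` is an orientation of the simple graph `G`: each edge of `G` is assigned exactly
one of its two directions. -/
def IsOrientation {V : Type} (G : SimpleGraph V) (D : V → V → Prop) : Prop :=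
  (∀ u v, D u v → G.Adj u v) ∧ ∀ u v, G.Adj u v → Xor' (D u v) (D v u)

/-! Weight a walk in an orientation by `m` for each step along an arc and `m - n` for each step
against one. A homomorphism to `K_{n/m}`, read in `[0, n)`, orients every edge upwards and is a
potential whose increase along each arc lies in `[m, n - m]`; the weight of a walk is at most the
increase of the potential along it, so closed walks have weight `≤ 0` and, the increase being
`< n`, walks of length `n` have at least `m` backward steps. Conversely, the latter property
forces closed walks to have weight `≤ 0`, and then the largest weight of a walk ending at `v` is a
potential, which reduced mod `n` is a homomorphism to `K_{n/m}`. -/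

namespace CircularGallaiRoy

open Finset

section Walks

variable {V : Type*} (D : V → V → Prop)

def ArcStep : Bool → V → V → Prop
  | true, u, v => D u v
  | false, u, v => D v u

/-- A walk of length `L` in the underlying graph of `D` through `w 0, …, w L`, whose `i`-th
step runs along the arc `w i → w (i + 1)` if `s i` and against the arc `w (i + 1) → w i`
otherwise. -/
def IsWalk (L : ℕ) (w : ℕ → V) (s : ℕ → Bool) : Prop :=
  ∀ i < L, ArcStep D (s i) (w i) (w (i + 1))

def backCount (L : ℕ) (s : ℕ → Bool) : ℕ := #{i ∈ range L | s i = false}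

/-- A closed walk has weight `≤ 0` iff its length is at most `n / m` times its number of
backward steps. -/
def stepWeight (n m : ℕ) : Bool → ℤ
  | true => m
  | false => m - n

def walkWeight (n m L : ℕ) (s : ℕ → Bool) : ℤ := ∑ i ∈ range L, stepWeight n m (s i)

def seqAppend {α : Type*} (k : ℕ) (f g : ℕ → α) (t : ℕ) : α :=
  if t < k then f t else g (t - k)

variable {D} {n m L : ℕ} {w : ℕ → V} {s : ℕ → Bool}

theorem walkWeight_eq (n m L : ℕ) (s : ℕ → Bool) :
    walkWeight n m L s = L * m - backCount L s * n := by
  have hstep : ∀ b, stepWeight n m b = m - (if b = false then (n : ℤ) else 0) := by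
    rintro (_ | _) <;> simp [stepWeight]
  simp only [walkWeight, hstep, sum_sub_distrib, ← sum_filter, sum_const, card_range, backCount,
    nsmul_eq_mul]

theorem walkWeight_le_mul (n m L : ℕ) (s : ℕ → Bool) : walkWeight n m L s ≤ L * m := by
  rw [walkWeight_eq]
  have : (0 : ℤ) ≤ backCount L s * n := by positivity
  linarith

theorem walkWeight_add (n m a b : ℕ) (s : ℕ → Bool) :
    walkWeight n m (a + b) s = walkWeight n m a s + walkWeight n m b (fun j => s (a + j)) :=
  sum_range_add _ _ _

theorem walkWeight_succ (n m L : ℕ) (s : ℕ → Bool) :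
    walkWeight n m (L + 1) s = walkWeight n m L s + stepWeight n m (s L) :=
  sum_range_succ _ _

theorem walkWeight_congr {s' : ℕ → Bool} (h : ∀ i < L, s i = s' i) :
    walkWeight n m L s = walkWeight n m L s' :=
  sum_congr rfl fun i hi => by rw [h i (mem_range.1 hi)]

theorem walkWeight_mul (n m k N : ℕ) (s : ℕ → Bool) :
    walkWeight n m (k * N) s = ∑ c ∈ range k, walkWeight n m N (fun j => s (c * N + j)) := by
  induction k with
  | zero => simp [walkWeight]
  | succ k ih => rw [Nat.succ_mul, walkWeight_add, ih, sum_range_succ]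

theorem walkWeight_seqAppend (n m k l : ℕ) (s₁ s₂ : ℕ → Bool) :
    walkWeight n m (k + l) (seqAppend k s₁ s₂) =
      walkWeight n m k s₁ + walkWeight n m l s₂ := by
  rw [walkWeight_add]
  congr 1 <;> refine walkWeight_congr fun i hi => ?_ <;> simp [seqAppend, hi]

theorem IsWalk.mono (hw : IsWalk D L w s) {L' : ℕ} (hL : L' ≤ L) : IsWalk D L' w s :=
  fun i hi => hw i (by omega)

theorem IsWalk.shift (hw : IsWalk D L w s) {k L' : ℕ} (hL : k + L' ≤ L) :
    IsWalk D L' (fun t => w (k + t)) (fun t => s (k + t)) :=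
  fun i hi => hw (k + i) (by omega)

theorem IsWalk.append {k l : ℕ} {w₁ w₂ : ℕ → V} {s₁ s₂ : ℕ → Bool} (h₁ : IsWalk D k w₁ s₁)
    (h₂ : IsWalk D l w₂ s₂) (hw : w₁ k = w₂ 0) :
    IsWalk D (k + l) (seqAppend k w₁ w₂) (seqAppend k s₁ s₂) := by
  intro i hi
  rcases lt_trichotomy (i + 1) k with h | h | h
  · simpa [seqAppend, h, show i < k by omega] using h₁ i (by omega)
  · simpa [seqAppend, h, show i < k by omega, ← hw] using h₁ i (by omega)
  · simpa [seqAppend, show ¬ i < k by omega, show ¬ i + 1 < k by omega,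
      show i + 1 - k = i - k + 1 by omega] using h₂ (i - k) (by omega)

theorem IsWalk.snoc (hw : IsWalk D L w s) {b : Bool} {v : V} (hb : ArcStep D b (w L) v) :
    ∃ w' s', IsWalk D (L + 1) w' s' ∧ w' (L + 1) = v ∧
      walkWeight n m (L + 1) s' = walkWeight n m L s + stepWeight n m b := by
  have hstep : IsWalk D 1 (fun t => if t = 0 then w L else v) (fun _ => b) := by
    intro i hi
    simpa [show i = 0 by omega] using hb
  refine ⟨_, _, hw.append hstep rfl, by simp [seqAppend], ?_⟩
  rw [walkWeight_seqAppend]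
  simp [walkWeight]

theorem IsWalk.periodic (hw : IsWalk D L w s) (hcl : w L = w 0) (hL : 0 < L) (N : ℕ) :
    IsWalk D N (fun i => w (i % L)) (fun i => s (i % L)) := by
  intro i _
  have hnext : w ((i + 1) % L) = w (i % L + 1) := by
    rw [← Nat.mod_add_mod]
    rcases Nat.lt_or_ge (i % L + 1) L with h | h
    · rw [Nat.mod_eq_of_lt h]
    · rw [show i % L + 1 = L by have := Nat.mod_lt i hL; omega, Nat.mod_self, hcl]
  simpa only [hnext] using hw (i % L) (Nat.mod_lt i hL)

theorem backCount_eq_card_filter (L : ℕ) (s : ℕ → Bool) :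
    backCount L s = (univ.filter fun i : Fin L => s i = false).card := by
  rw [backCount, card_filter, card_filter]
  exact (Fin.sum_univ_eq_sum_range (fun i => if s i = false then 1 else 0) L).symm

def IsWalk.toPathRelHom (hw : IsWalk D L w s) : pathRel L (fun i => s i) →r D where
  toFun i := w i
  map_rel' := by
    rintro _ _ ⟨i, ⟨hi, rfl, rfl⟩ | ⟨hi, rfl, rfl⟩⟩ <;>
      simpa [ArcStep, hi] using hw i i.isLt

theorem isWalk_of_pathRelHom {o : Fin L → Bool} (f : pathRel L o →r D) :
    IsWalk D L (fun i => f ⟨min i L, by omega⟩)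
      (fun i => if h : i < L then o ⟨i, h⟩ else true) := by
  intro i hi
  have hpath := f.map_rel (a := ⟨i, by omega⟩) (b := ⟨i + 1, by omega⟩)
  have hpath' := f.map_rel (a := ⟨i + 1, by omega⟩) (b := ⟨i, by omega⟩)
  cases ho : o ⟨i, hi⟩
  · simpa [ArcStep, hi, ho, hi.le] using
      hpath' ⟨⟨i, hi⟩, Or.inr ⟨ho, rfl, rfl⟩⟩
  · simpa [ArcStep, hi, ho, hi.le] using
      hpath ⟨⟨i, hi⟩, Or.inl ⟨ho, rfl, rfl⟩⟩

theorem forall_not_nonempty_pathRel_iff (hm : 0 < m) :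
    (∀ o : Fin n → Bool, (univ.filter fun i => o i = false).card ≤ m - 1 →
        ¬ Nonempty (pathRel n o →r D)) ↔
      ∀ w s, IsWalk D n w s → m ≤ backCount n s := by
  constructor
  · intro h w s hw
    by_contra hlt
    exact h (fun i => s i) (by rw [← backCount_eq_card_filter]; omega) ⟨hw.toPathRelHom⟩
  · rintro h o ho ⟨f⟩
    have hcount := h _ _ (isWalk_of_pathRelHom f)
    rw [backCount_eq_card_filter] at hcount
    simp only [Fin.is_lt, dite_true, Fin.eta] at hcount
    omega

end Walks

section Potentials

variable {V : Type*} {D : V → V → Prop} {n m L : ℕ} {w : ℕ → V} {s : ℕ → Bool}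

def IsCircPotential (D : V → V → Prop) (n m : ℕ) (ρ : V → ℤ) : Prop :=
  ∀ u v, D u v → (m : ℤ) ≤ ρ v - ρ u ∧ ρ v - ρ u ≤ (n : ℤ) - m

def ClosedWalkWeightNonpos (D : V → V → Prop) (n m : ℕ) : Prop :=
  ∀ L w s, IsWalk D L w s → w L = w 0 → walkWeight n m L s ≤ 0

def ClosedWalkRatioLE (D : V → V → Prop) (x : ℝ) : Prop :=
  ∀ L w s, IsWalk D L w s → w L = w 0 → (L : ℝ) ≤ x * backCount L s

theorem closedWalkRatioLE_div_iff (hm : 0 < m) :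
    ClosedWalkRatioLE D (n / m) ↔ ClosedWalkWeightNonpos D n m := by
  refine forall₄_congr fun L w s _ => imp_congr_right fun _ => ?_
  rw [walkWeight_eq, div_mul_eq_mul_div, le_div_iff₀ (by positivity), sub_nonpos]
  norm_cast
  rw [mul_comm n]

theorem ClosedWalkRatioLE.mono {x y : ℝ} (h : ClosedWalkRatioLE D x) (hxy : x ≤ y) :
    ClosedWalkRatioLE D y :=
  fun L w s hw hcl => (h L w s hw hcl).trans (by gcongr)

theorem isClosed_setOf_closedWalkRatioLE (D : V → V → Prop) :
    IsClosed {x : ℝ | ClosedWalkRatioLE D x} := by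
  simp only [ClosedWalkRatioLE, Set.ofPred_forall]
  exact isClosed_iInter fun L => isClosed_iInter fun w => isClosed_iInter fun s =>
    isClosed_iInter fun _ => isClosed_iInter fun _ =>
      isClosed_le continuous_const (continuous_id.mul continuous_const)

namespace IsCircPotential

variable {ρ : V → ℤ}

theorem walkWeight_le (hρ : IsCircPotential D n m ρ) (hw : IsWalk D L w s) :
    walkWeight n m L s ≤ ρ (w L) - ρ (w 0) := by
  induction L with
  | zero => simp [walkWeight]
  | succ L ih =>
    have hstep : stepWeight n m (s L) ≤ ρ (w (L + 1)) - ρ (w L) := by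
      have hL := hw L (by omega)
      cases hs : s L <;> simp only [hs, ArcStep] at hL <;> simp only [stepWeight] <;>
        linarith [hρ _ _ hL]
    rw [walkWeight_succ]
    linarith [ih (hw.mono (by omega))]

theorem closedWalkWeightNonpos (hρ : IsCircPotential D n m ρ) : ClosedWalkWeightNonpos D n m :=
  fun L w s hw hcl => by simpa [hcl] using hρ.walkWeight_le hw

theorem le_backCount (hρ : IsCircPotential D n m ρ) (hbound : ∀ v, 0 ≤ ρ v ∧ ρ v < n)
    (hw : IsWalk D n w s) : m ≤ backCount n s := by
  have hweight := hρ.walkWeight_le hw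
  rw [walkWeight_eq] at hweight
  have := hbound (w n)
  have := hbound (w 0)
  by_contra! hlt
  have : ((backCount n s : ℤ) + 1) * n ≤ m * n := by gcongr; exact_mod_cast hlt
  linarith

end IsCircPotential

/-- Wind a closed walk of length `L` around `n` times: cut into `L` windows of length `n`, each
with at least `m` backward steps and hence of weight `≤ 0`, its weight is `n` times the weight of
the closed walk. -/
theorem closedWalkWeightNonpos_of_le_backCount (hn : 0 < n)
    (hback : ∀ w s, IsWalk D n w s → m ≤ backCount n s) : ClosedWalkWeightNonpos D n m := by
  intro L w s hw hcl
  rcases Nat.eq_zero_or_pos L with rfl | hL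
  · simp [walkWeight]
  set s' : ℕ → Bool := fun i => s (i % L)
  have hwindow : ∀ t, walkWeight n m n (fun j => s' (t + j)) ≤ 0 := fun t => by
    have hcount := hback _ _ ((hw.periodic hcl hL (t + n)).shift le_rfl)
    rw [walkWeight_eq]
    have : (m : ℤ) * n ≤ backCount n (fun j => s' (t + j)) * n := by gcongr
    linarith
  have hperiod : ∀ c, walkWeight n m L (fun j => s' (c * L + j)) = walkWeight n m L s :=
    fun c => walkWeight_congr fun j hj => by simp [s', Nat.mod_eq_of_lt hj]
  have hwound : walkWeight n m (n * L) s' = n * walkWeight n m L s := by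
    simp [walkWeight_mul, hperiod]
  have : walkWeight n m (L * n) s' ≤ 0 := by
    rw [walkWeight_mul]
    exact sum_nonpos fun c _ => hwindow _
  rw [mul_comm, hwound] at this
  exact nonpos_of_mul_nonpos_right this (by exact_mod_cast hn)

namespace ClosedWalkWeightNonpos

/-- A walk that revisits a vertex contains a closed subwalk, whose removal does not decrease the
weight; a walk without repeated vertices has fewer than `card V` steps. -/
theorem walkWeight_le_card_mul [Fintype V] (hD : ClosedWalkWeightNonpos D n m) (L : ℕ)
    (w : ℕ → V) (s : ℕ → Bool) (hw : IsWalk D L w s) :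
    walkWeight n m L s ≤ Fintype.card V * m := by
  induction L using Nat.strong_induction_on generalizing w s with | _ L ih => ?_
  by_cases hinj : Function.Injective fun i : Fin (L + 1) => w i
  · have hcard := Fintype.card_le_of_injective _ hinj
    rw [Fintype.card_fin] at hcard
    calc walkWeight n m L s ≤ L * m := walkWeight_le_mul n m L s
      _ ≤ Fintype.card V * m := by gcongr; omega
  obtain ⟨i, j, hij, hjL, hrep⟩ : ∃ i j, i < j ∧ j ≤ L ∧ w i = w j := by
    obtain ⟨a, b, hab, hne⟩ := Function.not_injective_iff.1 hinj
    rcases lt_or_gt_of_ne (Fin.val_ne_of_ne hne) with h | h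
    · exact ⟨a, b, h, by omega, hab⟩
    · exact ⟨b, a, h, by omega, hab.symm⟩
  have hsplit : walkWeight n m L s = walkWeight n m i s +
      walkWeight n m (j - i) (fun t => s (i + t)) +
      walkWeight n m (L - j) (fun t => s (j + t)) := by
    rw [← walkWeight_add, show i + (j - i) = j by omega, ← walkWeight_add,
      show j + (L - j) = L by omega]
  have hloop := hD (j - i) _ _ (hw.shift (k := i) (L' := j - i) (by omega))
    (by simp [show i + (j - i) = j by omega, hrep])
  have hrest := ih (i + (L - j)) (by omega) _ _ <|
    (hw.mono (by omega : i ≤ L)).append (hw.shift (k := j) (L' := L - j) (by omega))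
      (by simpa using hrep)
  rw [walkWeight_seqAppend] at hrest
  linarith

theorem exists_isCircPotential [Fintype V] (hD : ClosedWalkWeightNonpos D n m) :
    ∃ ρ : V → ℤ, IsCircPotential D n m ρ := by
  let W : V → Set ℤ := fun v =>
    {x | ∃ L w s, IsWalk D L w s ∧ w L = v ∧ walkWeight n m L s = x}
  have hbdd : ∀ v, BddAbove (W v) := fun v => ⟨Fintype.card V * m, by
    rintro _ ⟨L, w, s, hw, -, rfl⟩
    exact hD.walkWeight_le_card_mul L w s hw⟩
  have hne : ∀ v, (W v).Nonempty := fun v =>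
    ⟨0, 0, fun _ => v, fun _ => true, fun i hi => absurd hi (Nat.not_lt_zero i), rfl, rfl⟩
  have hext : ∀ b u v, ArcStep D b u v → sSup (W u) + stepWeight n m b ≤ sSup (W v) := by
    intro b u v huv
    obtain ⟨L, w, s, hw, rfl, hx⟩ := Int.csSup_mem (hne u) (hbdd u)
    obtain ⟨w', s', hw', hend, hweight⟩ := hw.snoc (n := n) (m := m) huv
    exact le_csSup (hbdd v) ⟨L + 1, w', s', hw', hend, by rw [hweight, hx]⟩
  refine ⟨fun v => sSup (W v), fun u v huv => ⟨?_, ?_⟩⟩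
  · linarith [hext true u v huv, show stepWeight n m true = m from rfl]
  · linarith [hext false v u huv, show stepWeight n m false = m - n from rfl]

end ClosedWalkWeightNonpos

end Potentials

section Orientations

variable {V : Type} {G : SimpleGraph V} {D : V → V → Prop} {n m : ℕ}

theorem circRel_iff_val [NeZero n] (hm : 0 < m) {x y : ZMod n} :
    circRel n m x y ↔ m ≤ (x - y).val ∧ (x - y).val ≤ n - m := by
  constructor
  · rintro ⟨k, hk₁, hk₂, hk⟩
    rw [hk, ZMod.val_cast_of_lt (by have := NeZero.pos n; omega)]
    exact ⟨hk₁, hk₂⟩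
  · rintro ⟨h₁, h₂⟩
    exact ⟨_, h₁, h₂, (ZMod.natCast_zmod_val _).symm⟩

theorem circRel_symm {x y : ZMod n} (h : circRel n m x y) : circRel n m y x := by
  obtain ⟨k, hk₁, hk₂, hk⟩ := h
  refine ⟨n - k, by omega, by omega, ?_⟩
  rw [Nat.cast_sub (by omega), ZMod.natCast_self, zero_sub, ← hk, neg_sub]

theorem circRel_intCast {a b : ℤ} (h₁ : (m : ℤ) ≤ a - b) (h₂ : a - b ≤ (n : ℤ) - m) :
    circRel n m (a : ZMod n) (b : ZMod n) := by
  refine ⟨(a - b).toNat, by omega, by omega, ?_⟩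
  rw [← Int.cast_natCast, Int.toNat_of_nonneg (by omega), Int.cast_sub]

def IsCircPotential.toRelHom {ρ : V → ℤ} (hρ : IsCircPotential D n m ρ)
    (hD : IsOrientation G D) : G.Adj →r circRel n m where
  toFun v := ρ v
  map_rel' {u v} huv := by
    rcases hD.2 u v huv with ⟨h, -⟩ | ⟨h, -⟩
    · exact circRel_symm (circRel_intCast (hρ u v h).1 (hρ u v h).2)
    · exact circRel_intCast (hρ v u h).1 (hρ v u h).2

theorem exists_orientation_isCircPotential [NeZero n] (hm : 0 < m)
    (c : G.Adj →r circRel n m) :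
    ∃ (D : V → V → Prop) (ρ : V → ℤ), IsOrientation G D ∧ IsCircPotential D n m ρ ∧
      ∀ v, 0 ≤ ρ v ∧ ρ v < n := by
  have hne : ∀ u v, G.Adj u v → (c u).val ≠ (c v).val := fun u v huv heq => by
    have := (circRel_iff_val hm).1 (c.map_rel huv)
    rw [ZMod.val_injective n heq, sub_self, ZMod.val_zero] at this
    omega
  refine ⟨fun u v => G.Adj u v ∧ (c u).val < (c v).val, fun v => (c v).val,
    ⟨fun u v h => h.1, fun u v huv => ?_⟩, fun u v ⟨huv, hlt⟩ => ?_,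
    fun v => ⟨by positivity, Int.ofNat_lt.2 (ZMod.val_lt (c v))⟩⟩
  · have := hne u v huv
    rcases lt_or_gt_of_ne this with h | h
    · exact Or.inl ⟨⟨huv, h⟩, fun h' => by omega⟩
    · exact Or.inr ⟨⟨huv.symm, h⟩, fun h' => by omega⟩
  · have := (circRel_iff_val hm).1 (circRel_symm (c.map_rel huv))
    rw [ZMod.val_sub hlt.le] at this
    dsimp only
    omega

theorem nonempty_relHom_circRel_card_add_two [Fintype V] (G : SimpleGraph V) :
    Nonempty (G.Adj →r circRel (Fintype.card V + 2) 1) := by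
  obtain ⟨f⟩ := Function.Embedding.nonempty_of_card_le
    (show Fintype.card V ≤ Fintype.card (ZMod (Fintype.card V + 2)) by simp)
  refine ⟨⟨f, fun {u v} huv => (circRel_iff_val one_pos).2 ⟨?_, ?_⟩⟩⟩
  · rw [Nat.one_le_iff_ne_zero, ne_eq, ZMod.val_eq_zero, sub_eq_zero]
    exact fun h => G.ne_of_adj huv (f.injective h)
  · have := ZMod.val_lt (f u - f v)
    omega

theorem circChrom_le_of_relHom [Fintype V] (hm : 0 < m) (h2 : 2 * m ≤ n) (hcop : n.Coprime m)
    (c : G.Adj →r circRel n m) : circChrom G ≤ n / m :=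
  csInf_le ⟨0, by rintro _ ⟨_, _, -, -, -, -, rfl⟩; positivity⟩ ⟨n, m, hm, h2, hcop, ⟨c⟩, rfl⟩

/-- The set of ratios admitting an orientation of `G` in which every closed walk `C` satisfies
`|C| ≤ x |C⁻|` is a finite union, over orientations, of closed sets; it contains every ratio
realised by a homomorphism to a circular clique, hence their infimum. -/
theorem exists_orientation_closedWalkRatioLE [Fintype V] {x : ℝ} (hx : circChrom G ≤ x) :
    ∃ D, IsOrientation G D ∧ ClosedWalkRatioLE D x := by
  let U := {y : ℝ | ∃ D, IsOrientation G D ∧ ClosedWalkRatioLE D y}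
  have hU : IsClosed U := by
    have : U = ⋃ D : {D : V → V → Prop // IsOrientation G D}, {y | ClosedWalkRatioLE D.1 y} := by
      ext; simp [U]
    rw [this]
    exact isClosed_iUnion_of_finite fun D => isClosed_setOf_closedWalkRatioLE D.1
  have hsub : {y : ℝ | ∃ n m : ℕ, 0 < m ∧ 2 * m ≤ n ∧ Nat.Coprime n m ∧
      Nonempty (G.Adj →r circRel n m) ∧ y = (n : ℝ) / (m : ℝ)} ⊆ U := by
    rintro _ ⟨n, m, hm, h2, -, ⟨c⟩, rfl⟩
    have : NeZero n := ⟨by omega⟩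
    obtain ⟨D, ρ, hD, hρ, -⟩ := exists_orientation_isCircPotential hm c
    exact ⟨D, hD, (closedWalkRatioLE_div_iff hm).2 hρ.closedWalkWeightNonpos⟩
  obtain ⟨c⟩ := nonempty_relHom_circRel_card_add_two G
  obtain ⟨D, hD, hratio⟩ : circChrom G ∈ U := hU.closure_subset_iff.2 hsub <|
    csInf_mem_closure ⟨_, _, 1, one_pos, by omega, Nat.coprime_one_right _, ⟨c⟩, rfl⟩
      ⟨0, by rintro _ ⟨_, _, -, -, -, -, rfl⟩; positivity⟩
  exact ⟨D, hD, hratio.mono hx⟩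

end Orientations

end CircularGallaiRoy

open CircularGallaiRoy in
/-- Circular Gallai–Roy theorem: for relatively prime positive integers `n`, `m` with
`2m ≤ n`, a finite simple graph `G` has circular chromatic number at most `n/m` iff `G`
admits an orientation `G⃗` such that no oriented path obtained from the directed path
`P⃗_n` by reversing at most `m-1` arcs admits a homomorphism to `G⃗`. -/
theorem circular_gallai_roy {V : Type} [Fintype V] (G : SimpleGraph V) (n m : ℕ)
    (hm : 0 < m) (h2 : 2 * m ≤ n) (hcop : Nat.Coprime n m) :
    circChrom G ≤ (n : ℝ) / (m : ℝ) ↔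
    ∃ D : V → V → Prop, IsOrientation G D ∧
      ∀ o : Fin n → Bool, (Finset.univ.filter fun i => o i = false).card ≤ m - 1 →
        ¬ Nonempty (pathRel n o →r D) := by
  have : NeZero n := ⟨by omega⟩
  constructor
  · intro hle
    obtain ⟨D, hD, hratio⟩ := exists_orientation_closedWalkRatioLE hle
    obtain ⟨ρ, hρ⟩ := ((closedWalkRatioLE_div_iff hm).1 hratio).exists_isCircPotential
    obtain ⟨D', ρ', hD', hρ', hbound⟩ := exists_orientation_isCircPotential hm (hρ.toRelHom hD)
    exact ⟨D', hD', (forall_not_nonempty_pathRel_iff hm).2 fun _ _ hw => hρ'.le_backCount hbound hw⟩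
  · rintro ⟨D, hD, hpaths⟩
    have hback := (forall_not_nonempty_pathRel_iff hm).1 hpaths
    obtain ⟨ρ, hρ⟩ :=
      (closedWalkWeightNonpos_of_le_backCount (NeZero.pos n) hback).exists_isCircPotential
    exact circChrom_le_of_relHom hm h2 hcop (hρ.toRelHom hD)
end
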